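/- For every f, g ∈ k[X], the algebra P(f,g) is a domain and is left and right Noetherian. -/

import Mathlib

open Polynomial

noncomputable section

/-- Defining relations of `P(f,g)`: with `a = ι 0`, `c = ι 1`, `d = ι 2`,
`a·c = c·a + f(c)`, `d·c = c·d + f(c)`, `d·a = (a − g(c))·d + g(c)·a`. -/
inductive PRel (k : Type) [Field k] (f g : k[X]) :
    FreeAlgebra k (Fin 3) → FreeAlgebra k (Fin 3) → Prop
  | ac : PRel k f g (FreeAlgebra.ι k 0 * FreeAlgebra.ι k 1)
      (FreeAlgebra.ι k 1 * FreeAlgebra.ι k 0 + aeval (FreeAlgebra.ι k 1) f)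
  | dc : PRel k f g (FreeAlgebra.ι k 2 * FreeAlgebra.ι k 1)
      (FreeAlgebra.ι k 1 * FreeAlgebra.ι k 2 + aeval (FreeAlgebra.ι k 1) f)
  | da : PRel k f g (FreeAlgebra.ι k 2 * FreeAlgebra.ι k 0)
      ((FreeAlgebra.ι k 0 - aeval (FreeAlgebra.ι k 1) g) * FreeAlgebra.ι k 2
        + aeval (FreeAlgebra.ι k 1) g * FreeAlgebra.ι k 0)

/-- The algebra `P(f,g)`. -/
abbrev PAlg (k : Type) [Field k] (f g : k[X]) := RingQuot (PRel k f g)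

/-- The generator `a` of `P(f,g)`. -/
def Pa (k : Type) [Field k] (f g : k[X]) : PAlg k f g :=
  RingQuot.mkAlgHom k (PRel k f g) (FreeAlgebra.ι k 0)

/-- The generator `c` of `P(f,g)`. -/
def Pc (k : Type) [Field k] (f g : k[X]) : PAlg k f g :=
  RingQuot.mkAlgHom k (PRel k f g) (FreeAlgebra.ι k 1)

/-- The generator `d` of `P(f,g)`. -/
def Pd (k : Type) [Field k] (f g : k[X]) : PAlg k f g :=
  RingQuot.mkAlgHom k (PRel k f g) (FreeAlgebra.ι k 2)

/-- The element `u = d - a` of `P(f,g)`. -/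
def Pu (k : Type) [Field k] (f g : k[X]) : PAlg k f g := Pd k f g - Pa k f g


open Polynomial

noncomputable section

namespace PPf

variable {k : Type} [Field k] (f g : k[X])

local notation "V" => MvPolynomial (Fin 3) k

open MvPolynomial in
/-- left multiplication operator -/
def ml (p : V) : Module.End k V := Algebra.lmul k V p

section Ops
open MvPolynomial

@[simp] lemma ml_apply (p q : V) : ml (k := k) p q = p * q := rfl

lemma ml_mul (p q : V) : ml (k := k) (p * q) = ml p * ml q := map_mul _ _ _

def OpC : Module.End k V := ml (X 2)
def OpU : Module.End k V := ml (X 1)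
def OpA : Module.End k V :=
  ml (X 0) + (ml (Polynomial.aeval (X 2 : V) g * X 1)).comp (pderiv 1).toLinearMap
    + (ml (Polynomial.aeval (X 2 : V) f)).comp (pderiv 2).toLinearMap

lemma OpA_apply (p : V) :
    OpA f g p = X 0 * p + Polynomial.aeval (X 2 : V) g * X 1 * pderiv 1 p
      + Polynomial.aeval (X 2 : V) f * pderiv 2 p := rfl

lemma aeval_opC (h : k[X]) :
    Polynomial.aeval (OpC (k := k)) h = ml (Polynomial.aeval (X 2 : V) h) := by
  rw [OpC, ml, Polynomial.aeval_algHom_apply]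
  rfl

lemma pderiv_aeval_ne (h : k[X]) {i : Fin 3} (hi : i ≠ 2) :
    pderiv i (Polynomial.aeval (X 2 : V) h) = 0 := by
  induction h using Polynomial.induction_on' with
  | add p q hp hq => simp [hp, hq]
  | monomial n r =>
    simp [Polynomial.aeval_monomial, pderiv_C_mul, pderiv_pow,
      pderiv_X_of_ne (show (2 : Fin 3) ≠ i from fun hh => hi hh.symm)]

lemma relC : OpA f g * OpC = OpC * OpA f g + Polynomial.aeval (OpC (k := k)) f := by
  rw [aeval_opC]
  refine LinearMap.ext fun p => ?_
  simp only [Module.End.mul_apply, LinearMap.add_apply, OpA_apply, OpC, ml_apply, pderiv_mul,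
    pderiv_X_self, pderiv_X_of_ne (show (2:Fin 3) ≠ 1 by decide),
    pderiv_aeval_ne f (show (1:Fin 3) ≠ 2 by decide), pderiv_X_of_ne (show (1:Fin 3) ≠ 2 by decide)]
  ring

lemma relUC : OpU * OpC = OpC * OpU (k := k) := by
  rw [OpU, OpC, ← ml_mul, ← ml_mul, mul_comm]

lemma relUA : OpU * OpA f g = (OpA f g - ml (Polynomial.aeval (X 2 : V) g)) * OpU := by
  refine LinearMap.ext fun p => ?_
  simp only [Module.End.mul_apply, LinearMap.sub_apply, OpA_apply, OpU, ml_apply, pderiv_mul,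
    pderiv_X_self, pderiv_X_of_ne (show (1:Fin 3) ≠ 2 by decide),
    pderiv_aeval_ne g (show (1:Fin 3) ≠ 2 by decide), pderiv_X_of_ne (show (1:Fin 3) ≠ 2 by decide)]
  ring

end Ops

section Rho
open MvPolynomial

variable {k : Type} [Field k] (f g : k[X])

def FOp : FreeAlgebra k (Fin 3) →ₐ[k] Module.End k (MvPolynomial (Fin 3) k) :=
  FreeAlgebra.lift k ![OpA f g, OpC, OpA f g + OpU]

lemma FOp_rel : ∀ ⦃x y⦄, PRel k f g x y → FOp f g x = FOp f g y := by
  intro x y h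
  induction h with
  | ac =>
    simp only [FOp, map_mul, map_add, FreeAlgebra.lift_ι_apply, ← Polynomial.aeval_algHom_apply,
      Matrix.cons_val_zero, Matrix.cons_val_one, Matrix.head_cons, Matrix.cons_val_two,
      Matrix.tail_cons]
    show OpA f g * OpC = OpC * OpA f g + Polynomial.aeval OpC f
    exact relC f g
  | dc =>
    simp only [FOp, map_mul, map_add, FreeAlgebra.lift_ι_apply, ← Polynomial.aeval_algHom_apply,
      Matrix.cons_val_zero, Matrix.cons_val_one, Matrix.head_cons, Matrix.cons_val_two,
      Matrix.tail_cons]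
    show (OpA f g + OpU) * OpC = OpC * (OpA f g + OpU) + Polynomial.aeval OpC f
    rw [add_mul, mul_add, relC f g, relUC]
    abel
  | da =>
    simp only [FOp, map_mul, map_add, map_sub, FreeAlgebra.lift_ι_apply,
      ← Polynomial.aeval_algHom_apply, Matrix.cons_val_zero, Matrix.cons_val_one,
      Matrix.head_cons, Matrix.cons_val_two, Matrix.tail_cons]
    show (OpA f g + OpU) * OpA f g
      = (OpA f g - Polynomial.aeval OpC g) * (OpA f g + OpU)
        + Polynomial.aeval OpC g * OpA f g
    rw [aeval_opC, add_mul, relUA f g]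
    simp only [sub_mul, mul_add, add_mul]
    abel

def rho : PAlg k f g →ₐ[k] Module.End k (MvPolynomial (Fin 3) k) :=
  RingQuot.liftAlgHom k ⟨FOp f g, FOp_rel f g⟩

@[simp] lemma rho_Pa : rho f g (Pa k f g) = OpA f g := by
  rw [Pa, rho, RingQuot.liftAlgHom_mkAlgHom_apply, FOp, FreeAlgebra.lift_ι_apply]
  rfl

@[simp] lemma rho_Pc : rho f g (Pc k f g) = OpC := by
  rw [Pc, rho, RingQuot.liftAlgHom_mkAlgHom_apply, FOp, FreeAlgebra.lift_ι_apply]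
  rfl

@[simp] lemma rho_Pu : rho f g (Pu k f g) = OpU := by
  rw [Pu, map_sub, rho_Pa]
  rw [Pd, rho, RingQuot.liftAlgHom_mkAlgHom_apply, FOp, FreeAlgebra.lift_ι_apply]
  show OpA f g + OpU - OpA f g = OpU
  abel

end Rho



section Deg
open MvPolynomial

variable {k : Type} [Field k]

/-- exponents -/
abbrev E3 : Type := Fin 3 →₀ ℕ

def deg (v : MvPolynomial (Fin 3) k) : Lex E3 := v.support.sup toLex

def lead (v : MvPolynomial (Fin 3) k) : k := coeff (ofLex (deg v)) v

lemma le_deg {v : MvPolynomial (Fin 3) k} {m : E3} (h : m ∈ v.support) :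
    toLex m ≤ deg v := Finset.le_sup h

lemma coeff_eq_zero_of_deg_lt {v : MvPolynomial (Fin 3) k} {m : E3} (h : deg v < toLex m) :
    coeff m v = 0 := by
  by_contra hc
  exact absurd (le_deg (by simpa [MvPolynomial.mem_support_iff] using hc)) (not_le_of_gt h)

lemma exists_deg {v : MvPolynomial (Fin 3) k} (hv : v ≠ 0) :
    ofLex (deg v) ∈ v.support := by
  obtain ⟨m, hm, he⟩ := Finset.exists_mem_eq_sup v.support
    (by simpa using hv) toLex
  rw [deg, he]; simpa using hm

lemma lead_ne_zero {v : MvPolynomial (Fin 3) k} (hv : v ≠ 0) : lead v ≠ 0 := by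
  have := exists_deg hv
  rw [MvPolynomial.mem_support_iff] at this
  simpa [lead] using this

lemma deg_monomial {e : E3} {r : k} (hr : r ≠ 0) :
    deg (monomial e r) = toLex e := by
  classical
  rw [deg, MvPolynomial.support_monomial, if_neg hr, Finset.sup_singleton]

lemma lead_monomial {e : E3} {r : k} (hr : r ≠ 0) :
    lead (monomial e r) = r := by
  rw [lead, deg_monomial hr]
  simp

lemma deg_le_iff {v : MvPolynomial (Fin 3) k} {b : Lex E3} :
    deg v ≤ b ↔ ∀ m ∈ v.support, toLex m ≤ b := Finset.sup_le_iff

lemma lex_lt_of_apply_zero_lt {m n : E3} (h : m 0 < n 0) : toLex m < toLex n :=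
  ⟨0, fun d hd => absurd hd (by simp [Fin.lt_def]), h⟩

lemma apply_zero_le_of_lex_le {m n : E3} (h : toLex m ≤ toLex n) : m 0 ≤ n 0 := by
  rcases eq_or_lt_of_le h with heq | hlt
  · rw [show m = n from toLex.injective heq]
  · obtain ⟨i, hji, hi⟩ := hlt
    rcases eq_or_ne i 0 with rfl | h0
    · exact le_of_lt hi
    · exact le_of_eq (hji 0 (Fin.pos_iff_ne_zero.mpr h0))

end Deg

section Bnd
open MvPolynomial

variable {k : Type} [Field k]

/-- `T` raises degrees by exactly `w`, preserving leading coefficients. -/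
def Bnd (T : Module.End k (MvPolynomial (Fin 3) k)) (w : E3) : Prop :=
  ∀ q : MvPolynomial (Fin 3) k,
    (∀ m ∈ (T q).support, toLex m ≤ toLex (w + ofLex (deg q)))
    ∧ (q ≠ 0 → coeff (w + ofLex (deg q)) (T q) = lead q)

lemma Bnd.deg_lead {T : Module.End k (MvPolynomial (Fin 3) k)} {w : E3}
    (hT : Bnd T w) {q : MvPolynomial (Fin 3) k} (hq : q ≠ 0) :
    T q ≠ 0 ∧ deg (T q) = toLex (w + ofLex (deg q)) ∧ lead (T q) = lead q := by
  obtain ⟨h1, h2⟩ := hT q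
  have hmem : w + ofLex (deg q) ∈ (T q).support := by
    rw [MvPolynomial.mem_support_iff, h2 hq]
    exact lead_ne_zero hq
  have hne : T q ≠ 0 := fun h => by simp [h] at hmem
  have hdeg : deg (T q) = toLex (w + ofLex (deg q)) :=
    le_antisymm (deg_le_iff.mpr h1) (le_deg hmem)
  refine ⟨hne, hdeg, ?_⟩
  rw [lead, hdeg, ofLex_toLex, h2 hq]

lemma Bnd.mul {T T' : Module.End k (MvPolynomial (Fin 3) k)} {w w' : E3}
    (hT : Bnd T w) (hT' : Bnd T' w') : Bnd (T * T') (w + w') := by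
  intro q
  rcases eq_or_ne q 0 with rfl | hq
  · constructor
    · intro m hm
      simp [Module.End.mul_apply] at hm
    · intro h; exact absurd rfl h
  · obtain ⟨hne, hdeg, hlead⟩ := hT'.deg_lead hq
    obtain ⟨h1, h2⟩ := hT (T' q)
    rw [hdeg, ofLex_toLex] at h1 h2
    constructor
    · intro m hm
      have := h1 m (by simpa [Module.End.mul_apply] using hm)
      rwa [← add_assoc] at this
    · intro _
      rw [show w + w' + ofLex (deg q) = w + (w' + ofLex (deg q)) from add_assoc ..,
        Module.End.mul_apply, h2 hne, hlead]

lemma Bnd.one : Bnd (1 : Module.End k (MvPolynomial (Fin 3) k)) 0 := by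
  intro q
  constructor
  · intro m hm
    simpa [zero_add] using le_deg (by simpa using hm)
  · intro _
    simp [zero_add, lead]

lemma Bnd.pow {T : Module.End k (MvPolynomial (Fin 3) k)} {w : E3}
    (hT : Bnd T w) : ∀ n : ℕ, Bnd (T ^ n) (n • w)
  | 0 => by simpa using Bnd.one
  | (n + 1) => by
    have := (Bnd.pow hT n).mul hT
    rw [← pow_succ] at this
    simpa [add_smul, one_smul] using this

lemma Bnd_ml_X (i : Fin 3) : Bnd (ml (X i) : Module.End k (MvPolynomial (Fin 3) k))
    (Finsupp.single i 1) := by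
  intro q
  constructor
  · intro m hm
    rw [ml_apply, support_X_mul] at hm
    obtain ⟨m', hm', rfl⟩ := Finset.mem_map.mp hm
    show toLex (Finsupp.single i 1 + m') ≤ toLex (Finsupp.single i 1 + ofLex (deg q))
    exact add_le_add_right (le_deg hm') (toLex (Finsupp.single i 1))
  · intro hq
    rw [ml_apply, MvPolynomial.coeff_X_mul]
    rfl

lemma supp_aeval_X2 (h : k[X]) :
    ∀ m ∈ (Polynomial.aeval (X 2 : MvPolynomial (Fin 3) k) h).support, m 0 = 0 := by
  classical
  induction h using Polynomial.induction_on' with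
  | add p q hp hq =>
    intro m hm
    rw [map_add] at hm
    rcases Finset.mem_union.mp (MvPolynomial.support_add hm) with h' | h'
    · exact hp m h'
    · exact hq m h'
  | monomial n r =>
    intro m hm
    rw [Polynomial.aeval_monomial, MvPolynomial.algebraMap_eq,
      MvPolynomial.C_mul_X_pow_eq_monomial] at hm
    have := Finset.mem_of_subset MvPolynomial.support_monomial_subset hm
    rw [Finset.mem_singleton] at this
    subst this
    exact Finsupp.single_eq_of_ne' (by decide)

lemma supp_pderiv {i : Fin 3} {q : MvPolynomial (Fin 3) k} :
    ∀ m ∈ (pderiv i q).support, ∃ s ∈ q.support, m = s - Finsupp.single i 1 := by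
  intro m hm
  classical
  have hq : pderiv i q = ∑ s ∈ q.support, MvPolynomial.monomial (s - Finsupp.single i 1)
      (MvPolynomial.coeff s q * (s i : k)) := by
    nth_rewrite 1 [MvPolynomial.as_sum q]
    rw [map_sum]
    exact Finset.sum_congr rfl fun s _ => pderiv_monomial
  rw [hq] at hm
  obtain ⟨s, hs, hmem⟩ := Finset.mem_biUnion.mp (MvPolynomial.support_sum hm)
  refine ⟨s, hs, ?_⟩
  exact Finset.mem_singleton.mp
    (Finset.mem_of_subset MvPolynomial.support_monomial_subset hmem)

end Bnd

section BndA
open MvPolynomial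

variable {k : Type} [Field k] (f g : k[X])

lemma supp_coeffmul_pderiv {q p2 : MvPolynomial (Fin 3) k} (hp2 : ∀ m ∈ p2.support, m 0 = 0)
    {i : Fin 3} (hi : i ≠ 0) :
    ∀ m ∈ (p2 * pderiv i q).support, m 0 ≤ ofLex (deg q) 0 := by
  classical
  intro m hm
  obtain ⟨m1, hm1, m2, hm2, rfl⟩ := Finset.mem_add.mp
    (Finset.mem_of_subset (MvPolynomial.support_mul _ _) hm)
  obtain ⟨s, hs, rfl⟩ := supp_pderiv m2 hm2
  have h2 : ((s - Finsupp.single i 1 : E3)) 0 = s 0 := by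
    rw [Finsupp.tsub_apply, Finsupp.single_eq_of_ne' hi]
    rfl
  rw [Finsupp.add_apply, hp2 m1 hm1, h2, zero_add]
  exact apply_zero_le_of_lex_le (le_deg hs)

lemma supp_GX1 : ∀ m ∈ ((Polynomial.aeval (X 2 : MvPolynomial (Fin 3) k) g) * X 1).support,
    m 0 = 0 := by
  classical
  intro m hm
  obtain ⟨m1, hm1, m2, hm2, rfl⟩ := Finset.mem_add.mp
    (Finset.mem_of_subset (MvPolynomial.support_mul _ _) hm)
  have h2 : m2 = Finsupp.single 1 1 := by
    rw [MvPolynomial.X, MvPolynomial.support_monomial, if_neg one_ne_zero] at hm2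
    exact Finset.mem_singleton.mp hm2
  rw [Finsupp.add_apply, supp_aeval_X2 g m1 hm1, h2,
    Finsupp.single_eq_of_ne' (by decide : (1 : Fin 3) ≠ 0)]
  rfl

lemma Bnd_A : Bnd (OpA f g) (Finsupp.single 0 1) := by
  classical
  intro q
  have hzero : ((Finsupp.single (0 : Fin 3) 1 + ofLex (deg q) : E3)) 0
      = ofLex (deg q) 0 + 1 := by
    rw [Finsupp.add_apply, Finsupp.single_eq_same, add_comm]
  have hd1 : ∀ m ∈ ((Polynomial.aeval (X 2 : MvPolynomial (Fin 3) k) g) * X 1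
      * pderiv 1 q).support, m 0 ≤ ofLex (deg q) 0 := by
    rw [mul_assoc, ← mul_assoc]
    exact supp_coeffmul_pderiv (supp_GX1 g) (by decide)
  have hd2 : ∀ m ∈ ((Polynomial.aeval (X 2 : MvPolynomial (Fin 3) k) f)
      * pderiv 2 q).support, m 0 ≤ ofLex (deg q) 0 :=
    supp_coeffmul_pderiv (supp_aeval_X2 f) (by decide)
  constructor
  · intro m hm
    rw [OpA_apply] at hm
    rcases Finset.mem_union.mp (Finset.mem_of_subset MvPolynomial.support_add hm) with h | h
    · rcases Finset.mem_union.mp (Finset.mem_of_subset MvPolynomial.support_add h) with h' | h'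
      · rw [support_X_mul] at h'
        obtain ⟨m', hm', rfl⟩ := Finset.mem_map.mp h'
        exact add_le_add_right (le_deg hm') (toLex (Finsupp.single 0 1))
      · refine le_of_lt (lex_lt_of_apply_zero_lt ?_)
        rw [hzero]
        exact Nat.lt_succ_of_le (hd1 m h')
    · refine le_of_lt (lex_lt_of_apply_zero_lt ?_)
      rw [hzero]
      exact Nat.lt_succ_of_le (hd2 m h)
  · intro hq
    rw [OpA_apply, MvPolynomial.coeff_add, MvPolynomial.coeff_add, MvPolynomial.coeff_X_mul]
    have c1 : MvPolynomial.coeff (Finsupp.single 0 1 + ofLex (deg q))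
        ((Polynomial.aeval (X 2 : MvPolynomial (Fin 3) k) g) * X 1 * pderiv 1 q) = 0 := by
      by_contra hc
      have := hd1 _ (MvPolynomial.mem_support_iff.mpr hc)
      rw [hzero] at this
      omega
    have c2 : MvPolynomial.coeff (Finsupp.single 0 1 + ofLex (deg q))
        ((Polynomial.aeval (X 2 : MvPolynomial (Fin 3) k) f) * pderiv 2 q) = 0 := by
      by_contra hc
      have := hd2 _ (MvPolynomial.mem_support_iff.mpr hc)
      rw [hzero] at this
      omega
    rw [c1, c2, add_zero, add_zero]
    rfl

end BndA

section Span

variable {k : Type} [Field k] (f g : k[X])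

lemma rel_ac : Pa k f g * Pc k f g
    = Pc k f g * Pa k f g + Polynomial.aeval (Pc k f g) f := by
  have := RingQuot.mkAlgHom_rel k (PRel.ac (k := k) (f := f) (g := g))
  simp only [map_mul, map_add, ← Polynomial.aeval_algHom_apply] at this
  exact this

lemma rel_dc : Pd k f g * Pc k f g
    = Pc k f g * Pd k f g + Polynomial.aeval (Pc k f g) f := by
  have := RingQuot.mkAlgHom_rel k (PRel.dc (k := k) (f := f) (g := g))
  simp only [map_mul, map_add, ← Polynomial.aeval_algHom_apply] at this
  exact this

lemma rel_da : Pd k f g * Pa k f g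
    = (Pa k f g - Polynomial.aeval (Pc k f g) g) * Pd k f g
      + Polynomial.aeval (Pc k f g) g * Pa k f g := by
  have := RingQuot.mkAlgHom_rel k (PRel.da (k := k) (f := f) (g := g))
  simp only [map_mul, map_add, map_sub, ← Polynomial.aeval_algHom_apply] at this
  exact this

lemma rel_uc : Pu k f g * Pc k f g = Pc k f g * Pu k f g := by
  rw [Pu, sub_mul, mul_sub, rel_dc, rel_ac]
  abel

lemma rel_au : Pa k f g * Pu k f g
    = Pu k f g * Pa k f g + Polynomial.aeval (Pc k f g) g * Pu k f g := by
  have h := rel_da f g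
  rw [Pu, mul_sub, sub_mul, h]
  simp only [sub_mul, mul_sub]
  abel

/-- Normal monomials `c^i u^l a^j`. -/
def PMon (i l j : ℕ) : PAlg k f g := Pc k f g ^ i * (Pu k f g ^ l * Pa k f g ^ j)

/-- The span of normal monomials. -/
def PSpan : Submodule k (PAlg k f g) :=
  Submodule.span k (Set.range fun t : ℕ × ℕ × ℕ => PMon f g t.1 t.2.1 t.2.2)

lemma PMon_mem : ∀ i l j, PMon f g i l j ∈ PSpan f g := fun i l j =>
  Submodule.subset_span ⟨⟨i, l, j⟩, rfl⟩

lemma c_mul_PMon (i l j : ℕ) : Pc k f g * PMon f g i l j = PMon f g (i + 1) l j := by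
  rw [PMon, PMon, ← mul_assoc, ← pow_succ']

lemma u_mul_PMon (i l j : ℕ) : Pu k f g * PMon f g i l j = PMon f g i (l + 1) j := by
  have hcom : Commute (Pu k f g) (Pc k f g ^ i) :=
    (show Commute (Pu k f g) (Pc k f g) from rel_uc f g).pow_right i
  rw [PMon, PMon, ← mul_assoc, hcom.eq, mul_assoc, ← mul_assoc (Pu k f g), ← pow_succ']

lemma c_mul_mem {x : PAlg k f g} (hx : x ∈ PSpan f g) : Pc k f g * x ∈ PSpan f g := by
  induction hx using Submodule.span_induction with
  | mem y hy => obtain ⟨⟨i, l, j⟩, rfl⟩ := hy; rw [c_mul_PMon]; exact PMon_mem f g _ _ _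
  | zero => rw [mul_zero]; exact zero_mem _
  | add y z _ _ hy hz => rw [mul_add]; exact add_mem hy hz
  | smul r y _ hy => rw [mul_smul_comm]; exact Submodule.smul_mem _ _ hy

lemma u_mul_mem {x : PAlg k f g} (hx : x ∈ PSpan f g) : Pu k f g * x ∈ PSpan f g := by
  induction hx using Submodule.span_induction with
  | mem y hy => obtain ⟨⟨i, l, j⟩, rfl⟩ := hy; rw [u_mul_PMon]; exact PMon_mem f g _ _ _
  | zero => rw [mul_zero]; exact zero_mem _
  | add y z _ _ hy hz => rw [mul_add]; exact add_mem hy hz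
  | smul r y _ hy => rw [mul_smul_comm]; exact Submodule.smul_mem _ _ hy

lemma cpow_mul_mem {x : PAlg k f g} (hx : x ∈ PSpan f g) (n : ℕ) :
    Pc k f g ^ n * x ∈ PSpan f g := by
  induction n with
  | zero => rwa [pow_zero, one_mul]
  | succ n ih => rw [pow_succ', mul_assoc]; exact c_mul_mem f g ih

lemma aeval_mul_mem (h : k[X]) {x : PAlg k f g} (hx : x ∈ PSpan f g) :
    Polynomial.aeval (Pc k f g) h * x ∈ PSpan f g := by
  induction h using Polynomial.induction_on' with
  | add p q hp hq => rw [map_add, add_mul]; exact add_mem hp hq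
  | monomial n r =>
    rw [Polynomial.aeval_monomial, mul_assoc]
    have : algebraMap k (PAlg k f g) r * (Pc k f g ^ n * x)
        = r • (Pc k f g ^ n * x) := by rw [Algebra.smul_def]
    rw [this]
    exact Submodule.smul_mem _ _ (cpow_mul_mem f g hx n)

lemma a_mul_PMon (i l j : ℕ) : Pa k f g * PMon f g i l j ∈ PSpan f g := by
  induction i with
  | succ i ih =>
    rw [← c_mul_PMon, ← mul_assoc, rel_ac, add_mul, mul_assoc]
    exact add_mem (c_mul_mem f g ih) (aeval_mul_mem f g f (PMon_mem f g _ _ _))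
  | zero =>
    induction l with
    | succ l ihl =>
      rw [← u_mul_PMon, ← mul_assoc, rel_au, add_mul, mul_assoc, mul_assoc]
      exact add_mem (u_mul_mem f g ihl)
        (aeval_mul_mem f g g (u_mul_mem f g (PMon_mem f g _ _ _)))
    | zero =>
      have : Pa k f g * PMon f g 0 0 j = PMon f g 0 0 (j + 1) := by
        rw [PMon, PMon, pow_zero, pow_zero, one_mul, one_mul, one_mul, one_mul, ← pow_succ']
      rw [this]
      exact PMon_mem f g _ _ _

lemma a_mul_mem {x : PAlg k f g} (hx : x ∈ PSpan f g) : Pa k f g * x ∈ PSpan f g := by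
  induction hx using Submodule.span_induction with
  | mem y hy => obtain ⟨⟨i, l, j⟩, rfl⟩ := hy; exact a_mul_PMon f g i l j
  | zero => rw [mul_zero]; exact zero_mem _
  | add y z _ _ hy hz => rw [mul_add]; exact add_mem hy hz
  | smul r y _ hy => rw [mul_smul_comm]; exact Submodule.smul_mem _ _ hy

lemma mul_mem_PSpan {x y : PAlg k f g} (hx : x ∈ PSpan f g) (hy : y ∈ PSpan f g) :
    x * y ∈ PSpan f g := by
  induction hx using Submodule.span_induction with
  | mem z hz =>
    obtain ⟨⟨i, l, j⟩, rfl⟩ := hz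
    have hj : ∀ n, Pa k f g ^ n * y ∈ PSpan f g := by
      intro n
      induction n with
      | zero => rwa [pow_zero, one_mul]
      | succ n ih => rw [pow_succ', mul_assoc]; exact a_mul_mem f g ih
    have hl : ∀ n, Pu k f g ^ n * (Pa k f g ^ j * y) ∈ PSpan f g := by
      intro n
      induction n with
      | zero => rw [pow_zero, one_mul]; exact hj j
      | succ n ih => rw [pow_succ', mul_assoc]; exact u_mul_mem f g ih
    simp only [PMon, mul_assoc]
    exact cpow_mul_mem f g (hl l) i
  | zero => rw [zero_mul]; exact zero_mem _
  | add z w _ _ hz hw => rw [add_mul]; exact add_mem hz hw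
  | smul r z _ hz => rw [smul_mul_assoc]; exact Submodule.smul_mem _ _ hz

lemma one_mem_PSpan : (1 : PAlg k f g) ∈ PSpan f g := by
  have : (1 : PAlg k f g) = PMon f g 0 0 0 := by simp [PMon]
  rw [this]; exact PMon_mem f g 0 0 0

/-- The normal monomials span everything. -/
lemma PSpan_eq_top : PSpan f g = ⊤ := by
  rw [Submodule.eq_top_iff']
  intro x
  let S : Subalgebra k (PAlg k f g) :=
    { carrier := PSpan f g
      mul_mem' := fun hx hy => mul_mem_PSpan f g hx hy
      add_mem' := fun hx hy => add_mem hx hy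
      one_mem' := one_mem_PSpan f g
      zero_mem' := zero_mem _
      algebraMap_mem' := fun r => by
        rw [Algebra.algebraMap_eq_smul_one]
        exact Submodule.smul_mem _ _ (one_mem_PSpan f g) }
  have hgen : Algebra.adjoin k (Set.range fun i : Fin 3 =>
      RingQuot.mkAlgHom k (PRel k f g) (FreeAlgebra.ι k i)) = ⊤ := by
    have heq : (Set.range fun i : Fin 3 => RingQuot.mkAlgHom k (PRel k f g) (FreeAlgebra.ι k i))
        = RingQuot.mkAlgHom k (PRel k f g) '' Set.range (FreeAlgebra.ι k) := by
      rw [← Set.range_comp]; rfl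
    rw [heq, ← AlgHom.map_adjoin, FreeAlgebra.adjoin_range_ι, Algebra.map_top]
    exact (AlgHom.range_eq_top _).mpr (RingQuot.mkAlgHom_surjective k _)
  have hle : Algebra.adjoin k (Set.range fun i : Fin 3 =>
      RingQuot.mkAlgHom k (PRel k f g) (FreeAlgebra.ι k i)) ≤ S := by
    rw [Algebra.adjoin_le_iff]
    rintro y ⟨i, rfl⟩
    fin_cases i
    · show Pa k f g ∈ PSpan f g
      have : Pa k f g = PMon f g 0 0 1 := by simp [PMon]
      rw [this]; exact PMon_mem f g _ _ _
    · show Pc k f g ∈ PSpan f g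
      have : Pc k f g = PMon f g 1 0 0 := by simp [PMon]
      rw [this]; exact PMon_mem f g _ _ _
    · show Pd k f g ∈ PSpan f g
      have : Pd k f g = Pu k f g + Pa k f g := by rw [Pu]; abel
      rw [this]
      refine add_mem ?_ ?_
      · have : Pu k f g = PMon f g 0 1 0 := by simp [PMon]
        rw [this]; exact PMon_mem f g _ _ _
      · have : Pa k f g = PMon f g 0 0 1 := by simp [PMon]
        rw [this]; exact PMon_mem f g _ _ _
  exact hle (hgen ▸ Algebra.mem_top : x ∈ _)

end Span

section Master
open MvPolynomial

variable {k : Type} [Field k] (f g : k[X])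

/-- Normal monomial indexed by an exponent vector. -/
def PM (e : E3) : PAlg k f g := PMon f g (e 2) (e 1) (e 0)

lemma e3_decomp (e : E3) :
    (Finsupp.single 2 (e 2) + (Finsupp.single 1 (e 1) + Finsupp.single 0 (e 0)) : E3) = e := by
  ext t
  fin_cases t <;> simp [Finsupp.single_apply]

lemma Bnd_rho_PM (e : E3) : Bnd (rho f g (PM f g e)) e := by
  have hC : Bnd (OpC ^ (e 2) : Module.End k (MvPolynomial (Fin 3) k))
      (Finsupp.single 2 (e 2)) := by
    have := (Bnd_ml_X (k := k) 2).pow (e 2)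
    rwa [Finsupp.smul_single, smul_eq_mul, mul_one] at this
  have hU : Bnd (OpU ^ (e 1) : Module.End k (MvPolynomial (Fin 3) k))
      (Finsupp.single 1 (e 1)) := by
    have := (Bnd_ml_X (k := k) 1).pow (e 1)
    rwa [Finsupp.smul_single, smul_eq_mul, mul_one] at this
  have hA : Bnd (OpA f g ^ (e 0)) (Finsupp.single 0 (e 0)) := by
    have := (Bnd_A f g).pow (e 0)
    rwa [Finsupp.smul_single, smul_eq_mul, mul_one] at this
  have := hC.mul (hU.mul hA)
  rw [e3_decomp] at this
  have hrho : rho f g (PM f g e)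
      = OpC ^ (e 2) * (OpU ^ (e 1) * OpA f g ^ (e 0)) := by
    rw [PM, PMon, map_mul, map_mul, map_pow, map_pow, map_pow, rho_Pa, rho_Pc, rho_Pu]
  rwa [hrho]

/-- The linear section sending commutative monomials to normal monomials. -/
def phi : MvPolynomial (Fin 3) k →ₗ[k] PAlg k f g :=
  (MvPolynomial.basisMonomials (Fin 3) k).constr k (PM f g)

lemma phi_monomial (e : E3) (r : k) : phi f g (monomial e r) = r • PM f g e := by
  have h1 : (monomial e r : MvPolynomial (Fin 3) k) = r • monomial e 1 := by
    rw [MvPolynomial.smul_monomial, smul_eq_mul, mul_one]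
  rw [h1, map_smul]
  congr 1
  have : (MvPolynomial.basisMonomials (Fin 3) k) e = monomial e 1 := by
    rw [MvPolynomial.coe_basisMonomials]
  rw [← this, phi]
  exact Module.Basis.constr_basis _ _ _ _

lemma phi_surjective : Function.Surjective (phi f g) := by
  intro x
  have hx : x ∈ PSpan f g := by rw [PSpan_eq_top]; trivial
  have hle : PSpan f g ≤ LinearMap.range (phi f g) := by
    rw [PSpan, Submodule.span_le]
    rintro y ⟨⟨i, l, j⟩, rfl⟩
    refine ⟨monomial (Finsupp.single 0 j + Finsupp.single 1 l + Finsupp.single 2 i) 1, ?_⟩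
    rw [phi_monomial, one_smul, PM]
    simp [Finsupp.single_apply]
  obtain ⟨v, hv⟩ := hle hx
  exact ⟨v, hv⟩

lemma master : ∀ (n : ℕ) (v : MvPolynomial (Fin 3) k), v.support.card ≤ n → v ≠ 0 →
    ∀ q : MvPolynomial (Fin 3) k, q ≠ 0 →
    (∀ m ∈ (rho f g (phi f g v) q).support,
        toLex m ≤ toLex (ofLex (deg v) + ofLex (deg q)))
    ∧ coeff (ofLex (deg v) + ofLex (deg q)) (rho f g (phi f g v) q) = lead v * lead q := by
  intro n
  induction n with
  | zero =>
    intro v hcard hv q hq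
    exact absurd (Finset.card_eq_zero.mp (Nat.le_zero.mp hcard))
      (fun h => hv (by rwa [← MvPolynomial.support_eq_empty]))
  | succ n IH =>
    intro v hcard hv q hq
    set e : E3 := ofLex (deg v) with he
    set r : k := lead v with hr
    have hrne : r ≠ 0 := lead_ne_zero hv
    set v' : MvPolynomial (Fin 3) k := v - monomial e r with hv'
    have hcoeff : ∀ m : E3, coeff m v' = if m = e then 0 else coeff m v := by
      intro m
      rcases eq_or_ne m e with rfl | hme
      · simp [hv', MvPolynomial.coeff_sub, MvPolynomial.coeff_monomial, lead, hr, he]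
      · simp [hv', MvPolynomial.coeff_sub, MvPolynomial.coeff_monomial, hme, Ne.symm hme]
    have hsupp' : v'.support ⊆ v.support.erase e := by
      intro m hm
      rw [MvPolynomial.mem_support_iff, hcoeff] at hm
      rcases eq_or_ne m e with rfl | hme
      · simp at hm
      · rw [if_neg hme] at hm
        exact Finset.mem_erase.mpr ⟨hme, MvPolynomial.mem_support_iff.mpr hm⟩
    have hdeg' : ∀ m ∈ v'.support, toLex m < toLex e := by
      intro m hm
      have h1 := Finset.mem_erase.mp (hsupp' hm)
      have hle : toLex m ≤ toLex e := by
        rw [show toLex e = deg v from toLex_ofLex (deg v)]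
        exact le_deg h1.2
      exact lt_of_le_of_ne hle (fun hcon => h1.1 (toLex.injective hcon))
    have hmonBnd := Bnd_rho_PM f g e
    have hsmul : rho f g (phi f g (monomial e r)) q = r • (rho f g (PM f g e) q) := by
      rw [phi_monomial, map_smul]
      rfl
    have hmon_supp : ∀ m ∈ (rho f g (phi f g (monomial e r)) q).support,
        toLex m ≤ toLex (e + ofLex (deg q)) := by
      intro m hm
      rw [hsmul] at hm
      exact (hmonBnd q).1 m (Finset.mem_of_subset (Finsupp.support_smul) hm)
    have hmon_coeff : coeff (e + ofLex (deg q)) (rho f g (phi f g (monomial e r)) q)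
        = r * lead q := by
      rw [hsmul, MvPolynomial.coeff_smul, (hmonBnd q).2 hq, smul_eq_mul]
    rcases eq_or_ne v' 0 with hz | hnz
    · have hveq : v = monomial e r := by
        have hz' : v - monomial e r = 0 := hz
        rwa [sub_eq_zero] at hz'
      constructor
      · intro m hm
        rw [hveq] at hm
        exact hmon_supp m hm
      · rw [hveq]
        exact hmon_coeff
    · -- inductive case
      have hvsplit : v = monomial e r + v' := by rw [hv']; abel
      have hcard' : v'.support.card ≤ n := by
        have h2 := Finset.card_le_card hsupp'
        have h3 : (v.support.erase e).card < v.support.card :=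
          Finset.card_erase_lt_of_mem (exists_deg hv)
        omega
      have hdegv' : deg v' < toLex e := by
        rcases Finset.exists_mem_eq_sup v'.support (by simpa using hnz) toLex with ⟨m, hm, hsup⟩
        rw [deg, hsup]
        exact hdeg' m hm
      obtain ⟨IH1, IH2⟩ := IH v' hcard' hnz q hq
      have hlt : toLex (ofLex (deg v') + ofLex (deg q)) < toLex (e + ofLex (deg q)) := by
        have : deg v' + deg q < toLex e + deg q := add_lt_add_left hdegv' (deg q)
        exact this
      have hsplit : rho f g (phi f g v) q
          = rho f g (phi f g (monomial e r)) q + rho f g (phi f g v') q := by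
        rw [hvsplit, map_add, map_add]
        rfl
      constructor
      · intro m hm
        rw [hsplit] at hm
        rcases Finset.mem_union.mp (Finset.mem_of_subset Finsupp.support_add hm) with h | h
        · exact hmon_supp m h
        · exact le_of_lt (lt_of_le_of_lt (IH1 m h) hlt)
      · rw [hsplit, MvPolynomial.coeff_add, hmon_coeff]
        have hzero : coeff (e + ofLex (deg q)) (rho f g (phi f g v') q) = 0 := by
          by_contra hc
          exact absurd (IH1 _ (MvPolynomial.mem_support_iff.mpr hc)) (not_le_of_gt hlt)
        rw [hzero, add_zero]

end Master

section Domain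
open MvPolynomial

variable {k : Type} [Field k] (f g : k[X])

/-- Evaluation of the representation at `1`. -/
def eps (x : PAlg k f g) : MvPolynomial (Fin 3) k := rho f g x 1

lemma deg_lead_of {w : E3} {p : MvPolynomial (Fin 3) k}
    (hb : ∀ m ∈ p.support, toLex m ≤ toLex w) (hc : coeff w p ≠ 0) :
    p ≠ 0 ∧ deg p = toLex w ∧ lead p = coeff w p := by
  have hmem : w ∈ p.support := MvPolynomial.mem_support_iff.mpr hc
  have hne : p ≠ 0 := fun h => by simp [h] at hmem
  have hdeg : deg p = toLex w := le_antisymm (deg_le_iff.mpr hb) (le_deg hmem)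
  exact ⟨hne, hdeg, by rw [lead, hdeg, ofLex_toLex]⟩

lemma deg_one : deg (1 : MvPolynomial (Fin 3) k) = toLex 0 := by
  rw [show (1 : MvPolynomial (Fin 3) k) = MvPolynomial.monomial 0 1 by
    rw [← MvPolynomial.C_apply, map_one]]
  exact deg_monomial one_ne_zero

lemma lead_one : lead (1 : MvPolynomial (Fin 3) k) = 1 := by
  rw [show (1 : MvPolynomial (Fin 3) k) = MvPolynomial.monomial 0 1 by
    rw [← MvPolynomial.C_apply, map_one]]
  exact lead_monomial one_ne_zero

lemma eps_phi_spec {v : MvPolynomial (Fin 3) k} (hv : v ≠ 0) :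
    eps f g (phi f g v) ≠ 0 ∧ deg (eps f g (phi f g v)) = deg v
      ∧ lead (eps f g (phi f g v)) = lead v := by
  obtain ⟨hb, hc⟩ := master f g v.support.card v le_rfl hv 1 one_ne_zero
  have hepsdef : eps f g (phi f g v) = rho f g (phi f g v) 1 := rfl
  rw [← hepsdef] at hb hc
  rw [deg_one] at hb hc
  rw [ofLex_toLex, add_zero] at hb hc
  rw [lead_one, mul_one] at hc
  have h := deg_lead_of (p := eps f g (phi f g v)) hb (by rw [hc]; exact lead_ne_zero hv)
  refine ⟨h.1, ?_, ?_⟩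
  · rw [h.2.1, toLex_ofLex]
  · rw [h.2.2, hc]

lemma eps_ne_zero {x : PAlg k f g} (hx : x ≠ 0) : eps f g x ≠ 0 := by
  obtain ⟨v, rfl⟩ := phi_surjective f g x
  have hv : v ≠ 0 := fun h => hx (by rw [h, map_zero])
  exact (eps_phi_spec f g hv).1

lemma key_mul {x y : PAlg k f g} (hx : x ≠ 0) (hy : y ≠ 0) :
    x * y ≠ 0
      ∧ deg (eps f g (x * y)) = toLex (ofLex (deg (eps f g x)) + ofLex (deg (eps f g y)))
      ∧ lead (eps f g (x * y)) = lead (eps f g x) * lead (eps f g y) := by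
  obtain ⟨v, rfl⟩ := phi_surjective f g x
  have hv : v ≠ 0 := fun h => hx (by rw [h, map_zero])
  have hepsy : eps f g y ≠ 0 := eps_ne_zero f g hy
  obtain ⟨hb, hc⟩ := master f g v.support.card v le_rfl hv (eps f g y) hepsy
  have heq : eps f g (phi f g v * y) = rho f g (phi f g v) (eps f g y) := by
    show rho f g (phi f g v * y) 1 = _
    rw [map_mul]
    rfl
  obtain ⟨h1, h2, h3⟩ := eps_phi_spec f g hv
  rw [← heq] at hb hc
  have h := deg_lead_of hb (by
    rw [hc]
    exact mul_ne_zero (lead_ne_zero hv) (lead_ne_zero hepsy))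
  have hne : phi f g v * y ≠ 0 := by
    intro hcon
    apply h.1
    rw [hcon]
    show rho f g 0 1 = 0
    rw [map_zero]
    rfl
  refine ⟨hne, ?_, ?_⟩
  · rw [h.2.1, h2]
  · rw [h.2.2, hc, h3]

lemma PAlg_nontrivial : Nontrivial (PAlg k f g) := by
  refine ⟨1, 0, fun hcon => ?_⟩
  have h1 : eps f g 1 = 1 := by
    show rho f g 1 1 = 1
    rw [map_one (rho f g)]
    exact Module.End.one_apply 1
  have h0 : eps f g 0 = 0 := by
    show rho f g 0 1 = 0
    rw [map_zero]
    rfl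
  rw [hcon, h0] at h1
  exact one_ne_zero h1.symm

lemma PAlg_isDomain : IsDomain (PAlg k f g) := by
  haveI := PAlg_nontrivial f g
  haveI : NoZeroDivisors (PAlg k f g) := by
    refine ⟨fun {x y} hxy => ?_⟩
    by_contra hcon
    push_neg at hcon
    exact (key_mul f g hcon.1 hcon.2).1 hxy
  exact NoZeroDivisors.to_isDomain _

end Domain

section Noether
open MvPolynomial

variable {k : Type} [Field k] (f g : k[X])

lemma eps_zero : eps f g 0 = 0 := by
  show rho f g 0 1 = 0
  rw [map_zero]
  rfl

lemma PM_spec (e : E3) : PM f g e ≠ 0 ∧ deg (eps f g (PM f g e)) = toLex e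
    ∧ lead (eps f g (PM f g e)) = 1 := by
  have h1 : (monomial e 1 : MvPolynomial (Fin 3) k) ≠ 0 := fun hcon => by
    have := congrArg (MvPolynomial.coeff e) hcon
    simp [MvPolynomial.coeff_monomial] at this
  have h2 : phi f g (monomial e 1) = PM f g e := by rw [phi_monomial, one_smul]
  obtain ⟨ha, hb, hc⟩ := eps_phi_spec f g h1
  rw [h2] at ha hb hc
  rw [deg_monomial one_ne_zero] at hb
  rw [lead_monomial one_ne_zero] at hc
  exact ⟨fun hcon => ha (by rw [hcon, eps_zero]), hb, hc⟩

lemma reduce {x z : PAlg k f g} (hx : x ≠ 0) (hz : z ≠ 0)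
    (hdeg : deg (eps f g z) = deg (eps f g x)) :
    x - (lead (eps f g x) / lead (eps f g z)) • z = 0 ∨
      (x - (lead (eps f g x) / lead (eps f g z)) • z ≠ 0 ∧
        deg (eps f g (x - (lead (eps f g x) / lead (eps f g z)) • z)) < deg (eps f g x)) := by
  classical
  set lam := lead (eps f g x) / lead (eps f g z) with hlam
  set y := x - lam • z with hy
  have hlz : lead (eps f g z) ≠ 0 := lead_ne_zero (eps_ne_zero f g hz)
  have hepsy : eps f g y = eps f g x - lam • eps f g z := by
    show rho f g y 1 = _
    rw [hy, map_sub, map_smul]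
    rfl
  set w : E3 := ofLex (deg (eps f g x)) with hw
  have hcz : coeff w (eps f g z) = lead (eps f g z) := by
    rw [hw, ← hdeg]
    rfl
  have hc0 : coeff w (eps f g y) = 0 := by
    rw [hepsy, MvPolynomial.coeff_sub, MvPolynomial.coeff_smul, hcz, smul_eq_mul, hlam,
      div_mul_cancel₀ _ hlz]
    exact sub_self (lead (eps f g x))
  have hbound : ∀ m ∈ (eps f g y).support, toLex m ≤ deg (eps f g x) := by
    intro m hm
    rw [hepsy, sub_eq_add_neg] at hm
    rcases Finset.mem_union.mp (Finset.mem_of_subset MvPolynomial.support_add hm) with h | h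
    · exact le_deg h
    · rw [MvPolynomial.support_neg] at h
      have h2 := Finset.mem_of_subset Finsupp.support_smul h
      rw [← hdeg]
      exact le_deg h2
  rcases eq_or_ne y 0 with h0 | hne
  · left; exact h0
  · right
    refine ⟨hne, lt_of_le_of_ne (deg_le_iff.mpr hbound) (fun hcon => ?_)⟩
    have hmem := exists_deg (eps_ne_zero f g hne)
    rw [hcon, MvPolynomial.mem_support_iff] at hmem
    exact hmem hc0

lemma mem_span_monomials {S : Set E3} {m : E3}
    (hm : (monomial m (1:k) : MvPolynomial (Fin 3) k) ∈ Ideal.span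
      ((fun e => (monomial e (1:k) : MvPolynomial (Fin 3) k)) '' S)) :
    ∃ e ∈ S, e ≤ m := by
  classical
  obtain ⟨c, hsupp, hsum⟩ := Submodule.mem_span_set.mp hm
  by_contra hcon
  push_neg at hcon
  have h1 : coeff m (monomial m (1:k) : MvPolynomial (Fin 3) k) = 1 := by
    simp [MvPolynomial.coeff_monomial]
  rw [← hsum, Finsupp.sum, MvPolynomial.coeff_sum] at h1
  have h2 : ∀ a ∈ c.support, coeff m (c a • a) = 0 := by
    intro a ha
    obtain ⟨e, heS, rfl⟩ := hsupp ha
    rw [smul_eq_mul, MvPolynomial.coeff_mul_monomial', if_neg (hcon e heS)]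
  rw [Finset.sum_eq_zero h2] at h1
  exact one_ne_zero h1.symm

include k in
lemma gens_aux {R : Type} (I : Set R) (D : R → E3) :
    ∃ G : Finset R, ↑G ⊆ I ∧ ∀ x ∈ I, ∃ y ∈ G, D y ≤ D x := by
  classical
  set mon : E3 → MvPolynomial (Fin 3) k := fun e => monomial e (1:k) with hmon
  set J : Ideal (MvPolynomial (Fin 3) k) := Ideal.span (mon '' (D '' I)) with hJ
  obtain ⟨T, hT⟩ := IsNoetherian.noetherian J
  have hsub : ∀ t ∈ T, ∃ Ft : Finset (MvPolynomial (Fin 3) k),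
      ↑Ft ⊆ mon '' (D '' I) ∧ t ∈ Submodule.span (MvPolynomial (Fin 3) k) (↑Ft :
        Set (MvPolynomial (Fin 3) k)) := by
    intro t ht
    have h1 : t ∈ J := hT ▸ Submodule.subset_span ht
    exact Submodule.mem_span_finite_of_mem_span h1
  choose Ft hFt1 hFt2 using hsub
  set F : Finset (MvPolynomial (Fin 3) k) := T.attach.biUnion (fun t => Ft t t.2) with hF
  have hFsub : (↑F : Set (MvPolynomial (Fin 3) k)) ⊆ mon '' (D '' I) := by
    intro v hv
    obtain ⟨t, _, hvFt⟩ := Finset.mem_biUnion.mp hv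
    exact hFt1 t t.2 hvFt
  have hJF : J ≤ Submodule.span (MvPolynomial (Fin 3) k) (↑F :
      Set (MvPolynomial (Fin 3) k)) := by
    rw [← hT, Submodule.span_le]
    intro t ht
    refine Submodule.span_mono ?_ (hFt2 t ht)
    intro v hv
    exact Finset.mem_coe.mpr (Finset.mem_biUnion.mpr ⟨⟨t, ht⟩, Finset.mem_attach _ _, hv⟩)
  have hpick : ∀ v ∈ F, ∃ x, x ∈ I ∧ mon (D x) = v := by
    intro v hv
    obtain ⟨e, ⟨x, hxI, rfl⟩, rfl⟩ := hFsub hv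
    exact ⟨x, hxI, rfl⟩
  choose pick hpick1 hpick2 using hpick
  refine ⟨F.attach.image (fun v => pick v.1 v.2), ?_, ?_⟩
  · intro y hy
    obtain ⟨v, _, rfl⟩ := Finset.mem_image.mp hy
    exact hpick1 v.1 v.2
  · intro x hxI
    have hx1 : mon (D x) ∈ J := Submodule.subset_span ⟨D x, ⟨x, hxI, rfl⟩, rfl⟩
    have hx2 : mon (D x) ∈ Ideal.span (mon ''
        (D '' ↑(F.attach.image (fun v => pick v.1 v.2)))) := by
      refine Submodule.span_le.mpr ?_ (hJF hx1)
      intro v hv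
      refine Submodule.subset_span ?_
      rw [← hpick2 v hv]
      exact Set.mem_image_of_mem mon (Set.mem_image_of_mem D
        (Finset.mem_coe.mpr (Finset.mem_image.mpr ⟨⟨v, hv⟩, Finset.mem_attach _ _, rfl⟩)))
    obtain ⟨e, ⟨y, hyG, rfl⟩, hle⟩ := mem_span_monomials hx2
    exact ⟨y, hyG, hle⟩

lemma span_smul_mem {G : Set (PAlg k f g)} {z : PAlg k f g}
    (hz : z ∈ Ideal.span G) (lam : k) : lam • z ∈ Ideal.span G :=
  Submodule.smul_of_tower_mem _ lam hz

lemma ideal_fg (I : Ideal (PAlg k f g)) : I.FG := by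
  classical
  obtain ⟨G, hG1, hG2⟩ := gens_aux (k := k) ((I : Set (PAlg k f g)) \ {0})
    (fun x => ofLex (deg (eps f g x)))
  refine ⟨G, le_antisymm ?_ ?_⟩
  · rw [Ideal.span_le]
    intro y hy
    exact (hG1 hy).1
  · intro x hxI
    have H : ∀ b : Lex E3, ∀ x : PAlg k f g, x ∈ I → deg (eps f g x) = b →
        x ∈ Ideal.span (G : Set (PAlg k f g)) := by
      intro b
      induction b using WellFoundedLT.induction with
      | _ b IH =>
        intro x hxI hb
        rcases eq_or_ne x 0 with rfl | hx0
        · exact zero_mem _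
        obtain ⟨y, hyG, hyle⟩ := hG2 x ⟨hxI, hx0⟩
        have hyI : y ∈ I := (hG1 hyG).1
        have hy0 : y ≠ 0 := fun hcon => (hG1 hyG).2 (by rw [hcon]; rfl)
        set s : E3 := ofLex (deg (eps f g x)) - ofLex (deg (eps f g y)) with hs
        obtain ⟨hPMne, hPMdeg, hPMlead⟩ := PM_spec f g s
        obtain ⟨hzne, hzdeg, hzlead⟩ := key_mul f g hPMne hy0
        have hds : deg (eps f g (PM f g s * y)) = deg (eps f g x) := by
          rw [hzdeg, hPMdeg, ofLex_toLex, hs, tsub_add_cancel_of_le hyle, toLex_ofLex]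
        set z := PM f g s * y with hz
        set lam := lead (eps f g x) / lead (eps f g z) with hlam
        have hzI : z ∈ I := by
          rw [hz, ← smul_eq_mul]
          exact Submodule.smul_mem _ _ hyI
        have hzspan : z ∈ Ideal.span (G : Set (PAlg k f g)) := by
          rw [hz, ← smul_eq_mul]
          exact Submodule.smul_mem _ _ (Submodule.subset_span hyG)
        rcases reduce f g hx0 hzne hds with h0 | ⟨hyne, hylt⟩
        · have hxeq : x = lam • z := by
            rw [← sub_eq_zero]
            exact h0
          rw [hxeq]
          exact span_smul_mem f g hzspan lam
        · have hsubI : x - lam • z ∈ I :=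
            I.sub_mem hxI (Submodule.smul_of_tower_mem _ lam hzI)
          have hmem := IH (deg (eps f g (x - lam • z))) (hb ▸ hylt) (x - lam • z) hsubI rfl
          have hxeq : x = (x - lam • z) + lam • z := by abel
          rw [hxeq]
          exact add_mem hmem (span_smul_mem f g hzspan lam)
    exact H _ x hxI rfl

lemma ideal_fg_op (I : Ideal (PAlg k f g)ᵐᵒᵖ) : I.FG := by
  classical
  obtain ⟨G, hG1, hG2⟩ := gens_aux (k := k) ((I : Set (PAlg k f g)ᵐᵒᵖ) \ {0})
    (fun x => ofLex (deg (eps f g x.unop)))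
  refine ⟨G, le_antisymm ?_ ?_⟩
  · rw [Ideal.span_le]
    intro y hy
    exact (hG1 hy).1
  · intro x hxI
    have H : ∀ b : Lex E3, ∀ x : (PAlg k f g)ᵐᵒᵖ, x ∈ I → deg (eps f g x.unop) = b →
        x ∈ Ideal.span (G : Set (PAlg k f g)ᵐᵒᵖ) := by
      intro b
      induction b using WellFoundedLT.induction with
      | _ b IH =>
        intro x hxI hb
        rcases eq_or_ne x 0 with rfl | hx0
        · exact zero_mem _
        have hx0' : x.unop ≠ 0 := fun hcon => hx0 (MulOpposite.unop_injective (by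
          rw [hcon]; rfl))
        obtain ⟨y, hyG, hyle⟩ := hG2 x ⟨hxI, hx0⟩
        have hyI : y ∈ I := (hG1 hyG).1
        have hy0 : y ≠ 0 := fun hcon => (hG1 hyG).2 (by rw [hcon]; rfl)
        have hy0' : y.unop ≠ 0 := fun hcon => hy0 (MulOpposite.unop_injective (by
          rw [hcon]; rfl))
        set s : E3 := ofLex (deg (eps f g x.unop)) - ofLex (deg (eps f g y.unop)) with hs
        obtain ⟨hPMne, hPMdeg, hPMlead⟩ := PM_spec f g s
        obtain ⟨hzne, hzdeg, hzlead⟩ := key_mul f g hy0' hPMne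
        have hds : deg (eps f g (y.unop * PM f g s)) = deg (eps f g x.unop) := by
          rw [hzdeg, hPMdeg, ofLex_toLex, hs, add_comm, tsub_add_cancel_of_le hyle, toLex_ofLex]
        set z : (PAlg k f g)ᵐᵒᵖ := MulOpposite.op (PM f g s) * y with hz
        have hzunop : z.unop = y.unop * PM f g s := rfl
        have hzne' : z ≠ 0 := fun hcon => hzne (by rw [← hzunop, hcon]; rfl)
        set lam := lead (eps f g x.unop) / lead (eps f g z.unop) with hlam
        have hzI : z ∈ I := by
          rw [hz, ← smul_eq_mul]
          exact Submodule.smul_mem _ _ hyI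
        have hzspan : z ∈ Ideal.span (G : Set (PAlg k f g)ᵐᵒᵖ) := by
          rw [hz, ← smul_eq_mul]
          exact Submodule.smul_mem _ _ (Submodule.subset_span hyG)
        have hunopsub : (x - lam • z).unop = x.unop - lam • z.unop := by
          rw [MulOpposite.unop_sub, MulOpposite.unop_smul]
        have hdz : deg (eps f g z.unop) = deg (eps f g x.unop) := by
          rw [hzunop]
          exact hds
        rcases reduce f g hx0' (show z.unop ≠ 0 by rw [hzunop]; exact hzne) hdz
          with h0 | ⟨hyne, hylt⟩
        · have h0' : x - lam • z = 0 := MulOpposite.unop_injective (by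
            rw [hunopsub, h0]; rfl)
          have hxeq : x = lam • z := by rwa [sub_eq_zero] at h0'
          rw [hxeq]
          exact Submodule.smul_of_tower_mem _ lam hzspan
        · have hsubI : x - lam • z ∈ I :=
            I.sub_mem hxI (Submodule.smul_of_tower_mem _ lam hzI)
          have hmem := IH (deg (eps f g (x - lam • z).unop))
            (by rw [hunopsub]; exact hb ▸ hylt) (x - lam • z) hsubI rfl
          have hxeq : x = (x - lam • z) + lam • z := by abel
          rw [hxeq]
          exact add_mem hmem (Submodule.smul_of_tower_mem _ lam hzspan)
    exact H _ x hxI rfl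

end Noether

end PPf

theorem stmt8 (k : Type) [Field k] [IsAlgClosed k] [CharZero k] (f g : k[X]) :
    IsDomain (PAlg k f g) ∧ IsNoetherianRing (PAlg k f g) ∧
      IsNoetherianRing (PAlg k f g)ᵐᵒᵖ := by
  refine ⟨PPf.PAlg_isDomain f g, ?_, ?_⟩
  · exact (isNoetherianRing_iff_ideal_fg _).mpr (PPf.ideal_fg f g)
  · exact (isNoetherianRing_iff_ideal_fg _).mpr (PPf.ideal_fg_op f g)
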